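/- Let p_n ∈ ℤ[z] be defined by p_0 = 0 and p_{n+1} = p_n^2 + z, and for ℓ, n ∈ ℕ set q_{ℓ,n} = p_{ℓ+n} − p_ℓ. Fix ℓ ≥ 2, n ≥ 1, and a divisor k of n with k ≥ 1. If k does not divide ℓ−1, then h_k and the polynomial q_{ℓ−1,n} + 2 p_{ℓ−1} are relatively prime in ℂ[z]. If k divides ℓ−1, then h_k divides q_{ℓ−1,n} + 2 p_{ℓ−1} in ℂ[z]. -/
import Mathlib


open Polynomial

/-- The polynomials `p n` defined by `p 0 = 0`, `p (n+1) = p n ^ 2 + X`. -/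
noncomputable def P : ℕ → Polynomial ℤ
  | 0 => 0
  | n + 1 => P n ^ 2 + X

/-- The Misiurewicz–Thurston polynomials `q l n = p (l + n) - p l`. -/
noncomputable def Q (l n : ℕ) : Polynomial ℤ := P (l + n) - P l

/-- `p n` viewed over `ℂ`. -/
noncomputable def pC (n : ℕ) : Polynomial ℂ := (P n).map (Int.castRingHom ℂ)

/-- `q l n` viewed over `ℂ`. -/
noncomputable def qC (l n : ℕ) : Polynomial ℂ := (Q l n).map (Int.castRingHom ℂ)

/-- Hyperbolic centers of order `n`: roots of `p n` that are not roots of `p k`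
for any strict divisor `k` of `n`. -/
def hyp (n : ℕ) : Set ℂ :=
  {z | (pC n).eval z = 0 ∧ ∀ k : ℕ, k ∣ n → k ≠ n → (pC k).eval z ≠ 0}

/-- Misiurewicz points of type `(l, n)`. -/
def mis (l n : ℕ) : Set ℂ :=
  {z | (qC l n).eval z = 0 ∧ (qC (l - 1) n).eval z ≠ 0 ∧
    ∀ k : ℕ, k ∣ n → k ≠ n → (qC l k).eval z ≠ 0}

/-- Gleason's polynomial `h n = ∏_{r ∈ hyp n} (X - r)`. -/
noncomputable def hPoly (n : ℕ) : Polynomial ℂ := ∏ᶠ r ∈ hyp n, (X - C r)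

/-- Reduced Misiurewicz polynomial `m l n = ∏_{r ∈ mis l n} (X - r)`. -/
noncomputable def mPoly (l n : ℕ) : Polynomial ℂ := ∏ᶠ r ∈ mis l n, (X - C r)

/-- The multiplicity `η l k = ⌊(l - 1)/k⌋ + 2`, with the conventions
`η 0 k = 1` (floor taken in `ℤ`) and `η 1 k = 2`. -/
def eta (l k : ℕ) : ℕ := if l = 0 then 1 else (l - 1) / k + 2

/-! ### Auxiliary lemmas -/

lemma pC_zero' : pC 0 = 0 := by simp [pC, P]

lemma pC_succ' (n : ℕ) : pC (n + 1) = pC n ^ 2 + X := by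
  simp [pC, P, Polynomial.map_add, Polynomial.map_pow]

lemma evalP_zero' (z : ℂ) : (pC 0).eval z = 0 := by simp [pC_zero']

lemma evalP_succ' (n : ℕ) (z : ℂ) : (pC (n+1)).eval z = ((pC n).eval z)^2 + z := by
  simp [pC_succ']

/-- If `p c (z) = 0` then the sequence `m ↦ p m (z)` is `c`-periodic. -/
lemma period_add' {z : ℂ} {c : ℕ} (hc : (pC c).eval z = 0) (m : ℕ) :
    (pC (c + m)).eval z = (pC m).eval z := by
  induction m with
  | zero => simpa [evalP_zero'] using hc
  | succ m ih => rw [← Nat.add_assoc, evalP_succ', evalP_succ', ih]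

lemma period_mul' {z : ℂ} {c : ℕ} (hc : (pC c).eval z = 0) (j m : ℕ) :
    (pC (m + j * c)).eval z = (pC m).eval z := by
  induction j with
  | zero => simp
  | succ j ih =>
      have h : m + (j + 1) * c = c + (m + j * c) := by ring
      rw [h, period_add' hc, ih]

lemma eval_mul_self' {z : ℂ} {c : ℕ} (hc : (pC c).eval z = 0) (j : ℕ) :
    (pC (j * c)).eval z = 0 := by
  have h := period_mul' hc j 0
  simpa [evalP_zero'] using h

lemma gcd_root' {z : ℂ} : ∀ s : ℕ, ∀ k : ℕ, (pC s).eval z = 0 → (pC k).eval z = 0 →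
    (pC (Nat.gcd s k)).eval z = 0 := by
  intro s
  induction s using Nat.strong_induction_on with
  | _ s ih =>
    intro k hs hk
    rcases Nat.eq_zero_or_pos s with h0 | hpos
    · subst h0; simpa [Nat.gcd_zero_left] using hk
    · rw [Nat.gcd_rec s k]
      have hmod : (pC (k % s)).eval z = 0 := by
        have h := period_mul' hs (k / s) (k % s)
        rw [Nat.mod_add_div' k s] at h
        exact h.symm.trans hk
      exact ih (k % s) (Nat.mod_lt _ hpos) s hmod hs

lemma evalZ_two' : ∀ m : ℕ, 1 ≤ m → 2 ≤ (P m).eval 2 := by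
  intro m hm
  induction m with
  | zero => omega
  | succ m ih =>
      rcases Nat.eq_zero_or_pos m with h0 | hpos
      · subst h0; simp [P]
      · have h2 := ih hpos
        have h : (P (m+1)).eval 2 = ((P m).eval 2)^2 + 2 := by simp [P]
        nlinarith [sq_nonneg ((P m).eval 2)]

lemma pC_ne_zero' {k : ℕ} (hk : 1 ≤ k) : pC k ≠ 0 := by
  intro h
  have h2 : (pC k).eval (((2:ℤ) : ℂ)) = (((P k).eval 2 : ℤ) : ℂ) := by
    rw [pC, Polynomial.eval_intCast_map]; rfl
  rw [h] at h2
  have h3 := evalZ_two' k hk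
  simp only [Polynomial.eval_zero] at h2
  have h4 : (((P k).eval 2 : ℤ) : ℂ) ≠ 0 := by
    exact_mod_cast (by omega : (P k).eval 2 ≠ 0)
  exact h4 h2.symm

lemma qC_eq' (l n : ℕ) : qC l n = pC (l + n) - pC l := by
  simp [qC, Q, pC, Polynomial.map_sub]

lemma hyp_finite' {k : ℕ} (hk : 1 ≤ k) : (hyp k).Finite :=
  Set.Finite.subset (Polynomial.finite_setOf_isRoot (pC_ne_zero' hk)) fun _ hz => hz.1

lemma hPoly_eq' {k : ℕ} (hk : 1 ≤ k) :
    hPoly k = ∏ r ∈ (hyp_finite' hk).toFinset, (X - C r) :=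
  finprod_mem_eq_finite_toFinset_prod _ _

lemma root_iff' {k : ℕ} (hk : 1 ≤ k) {r : ℂ} (hr : r ∈ hyp k) (s : ℕ) (hs : 0 < s) :
    ((pC s).eval r = 0 ↔ k ∣ s) := by
  constructor
  · intro h0
    have hg : (pC (Nat.gcd s k)).eval r = 0 := gcd_root' s k h0 hr.1
    have hdvd : Nat.gcd s k ∣ k := Nat.gcd_dvd_right s k
    by_cases hek : Nat.gcd s k = k
    · exact hek ▸ Nat.gcd_dvd_left s k
    · exact absurd hg (hr.2 _ hdvd hek)
  · rintro ⟨j, rfl⟩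
    rw [Nat.mul_comm]
    exact eval_mul_self' hr.1 j

lemma key_eval' {l n k : ℕ} (hl : 2 ≤ l) (hkn : k ∣ n) (hk : 1 ≤ k) {r : ℂ}
    (hr : r ∈ hyp k) :
    (qC (l - 1) n + 2 * pC (l - 1)).eval r = 2 * (pC (l - 1)).eval r := by
  obtain ⟨j, rfl⟩ := hkn
  have hper : (pC (l - 1 + k * j)).eval r = (pC (l - 1)).eval r := by
    rw [Nat.mul_comm]; exact period_mul' hr.1 j (l - 1)
  rw [qC_eq']
  simp only [Polynomial.eval_add, Polynomial.eval_sub, Polynomial.eval_mul,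
    Polynomial.eval_ofNat, hper]
  ring

/-- If `k ∣ n` but `k ∤ l - 1`, then `h k` is coprime to `q (l-1) n + 2 p (l-1)` in `ℂ[z]`;
if `k ∣ l - 1` as well, then `h k` divides `q (l-1) n + 2 p (l-1)`. -/
theorem hPoly_coprime_or_dvd (l n k : ℕ) (hl : 2 ≤ l) (hn : 1 ≤ n)
    (hk : 1 ≤ k) (hkn : k ∣ n) :
    (¬ k ∣ l - 1 → IsCoprime (hPoly k) (qC (l - 1) n + 2 * pC (l - 1))) ∧
    (k ∣ l - 1 → hPoly k ∣ qC (l - 1) n + 2 * pC (l - 1)) := by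
  set F := qC (l - 1) n + 2 * pC (l - 1) with hF
  rw [hPoly_eq' hk]
  constructor
  · intro hndvd
    apply IsCoprime.prod_left
    intro r hrmem
    have hr : r ∈ hyp k := by simpa using hrmem
    have hne : (pC (l - 1)).eval r ≠ 0 := by
      intro h0
      exact hndvd ((root_iff' hk hr (l - 1) (by omega)).1 h0)
    have hFr : F.eval r ≠ 0 := by
      rw [key_eval' hl hkn hk hr]
      exact mul_ne_zero two_ne_zero hne
    rw [(Polynomial.irreducible_X_sub_C r).coprime_iff_not_dvd,
      Polynomial.dvd_iff_isRoot]
    exact hFr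
  · intro hdvd
    apply Finset.prod_dvd_of_coprime
    · exact ((Polynomial.pairwise_coprime_X_sub_C
        (Function.injective_id (α := ℂ))).set_pairwise _)
    · intro r hrmem
      have hr : r ∈ hyp k := by simpa using hrmem
      have h0 : (pC (l - 1)).eval r = 0 := by
        obtain ⟨j, hj⟩ := hdvd
        rw [hj, Nat.mul_comm]
        exact eval_mul_self' hr.1 j
      rw [Polynomial.dvd_iff_isRoot]
      show F.eval r = 0
      rw [key_eval' hl hkn hk hr, h0, mul_zero]
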